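/- arXiv:1112.1771 — 4 statements merged into one kernel-verified Lean document; each statement's English description precedes it below -/
import Mathlib

section
/- With B the k×k bidiagonal matrix as above, for every η ≥ 1 and every tail sum starting at index η, the series ∑_{j≥η} (B^j)_{1,k} z^j can be written as a finite sum ∑_{i=0}^{k-1} p_i z^{q_i}/(1-z)^i where each p_i is a nonnegative integer, each q_i is a positive integer, and p_{k-1} = 1. -/
/-!
A walk of length `n ≥ 1` from `τ₁` to `τ_k` must leave `τ₁` at once and then choose which `k - 2`
of its remaining `n - 1` steps advance, so `(Bⁿ)_{1,k} = C(n-1, k-2)`. Splitting those steps at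
time `η - 1` (Vandermonde) gives `C(n-1, k-2) = ∑ₘ C(η-1, k-2-m) C(n-η, m)` for `n ≥ η`, and
`∑_{n ≥ η} C(n-η, m) zⁿ = z^(η+m) / (1-z)^(m+1)`. Hence `p_{m+1} = C(η-1, k-2-m)`,
`q_{m+1} = η + m`, and `p₀ = 0`.
-/

open Finset PowerSeries

def pathWithLoops (R : Type*) [Zero R] [One R] (k : ℕ) : Matrix (Fin k) (Fin k) R :=
  Matrix.of fun i j => if (i = j ∧ 1 ≤ (j : ℕ)) ∨ (i : ℕ) + 1 = j then 1 else 0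

namespace pathWithLoops

variable {R : Type*} [Semiring R] {k : ℕ}

theorem sum_mul_apply (f : ℕ → R) (c : Fin k) :
    ∑ b : Fin k, f b * pathWithLoops R k b c = if (c : ℕ) = 0 then 0 else f c + f (c - 1) := by
  simp only [pathWithLoops, Matrix.of_apply, Fin.ext_iff, mul_ite, mul_one, mul_zero]
  rw [Fin.sum_univ_eq_sum_range
    (fun b => if (b = (c : ℕ) ∧ 1 ≤ (c : ℕ)) ∨ b + 1 = c then f b else 0)]
  split_ifs with hc
  · exact sum_eq_zero fun b _ => if_neg (by omega)
  · have hsplit : ∀ b ∈ range k, (if (b = (c : ℕ) ∧ 1 ≤ (c : ℕ)) ∨ b + 1 = c then f b else 0) =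
        (if (c : ℕ) = b then f b else 0) + (if (c : ℕ) - 1 = b then f b else 0) := by
      intro b _
      split_ifs <;> grind
    rw [sum_congr rfl hsplit, sum_add_distrib, sum_ite_eq, sum_ite_eq,
      if_pos (mem_range.2 c.2), if_pos (mem_range.2 (by have := c.2; omega))]

theorem pow_succ_apply_zero (hk : 0 < k) (j : ℕ) (c : Fin k) :
    (pathWithLoops R k ^ (j + 1)) ⟨0, hk⟩ c =
      if (c : ℕ) = 0 then 0 else ((j.choose (c - 1) : ℕ) : R) := by
  induction j generalizing c with
  | zero =>
    simp only [zero_add, pow_one, pathWithLoops, Matrix.of_apply, Fin.ext_iff]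
    rcases c with ⟨_ | _ | c, hc⟩ <;> simp
  | succ j ih =>
    rw [pow_succ, Matrix.mul_apply]
    simp only [ih]
    rw [sum_mul_apply (fun n => if n = 0 then 0 else ((j.choose (n - 1) : ℕ) : R))]
    rcases c with ⟨_ | _ | c, hc⟩ <;> simp [Nat.choose_succ_succ', add_comm]

end pathWithLoops

theorem Nat.choose_sub_one_eq_sum {η n : ℕ} (hη : 1 ≤ η) (hn : η ≤ n) (r : ℕ) :
    (n - 1).choose r = ∑ m ∈ range (r + 1), (η - 1).choose (r - m) * (n - η).choose m := by
  rw [show n - 1 = (n - η) + (η - 1) by omega, Nat.add_choose_eq,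
    Nat.sum_antidiagonal_eq_sum_range_succ (fun i j => (n - η).choose i * (η - 1).choose j)]
  exact sum_congr rfl fun m _ => mul_comm _ _

section

variable {R : Type*} [CommRing R]

theorem X_pow_add_mul_invOneSubPow (η m : ℕ) :
    X ^ (η + m) * (invOneSubPow R (m + 1)).val =
      PowerSeries.mk fun n => if η ≤ n then ((n - η).choose m : R) else 0 := by
  ext n
  rw [invOneSubPow_val_succ_eq_mk_add_choose, coeff_X_pow_mul', coeff_mk, coeff_mk]
  split_ifs with h1 h2 h2
  · rw [show m + (n - (η + m)) = n - η by omega]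
  · omega
  · rw [Nat.choose_eq_zero_of_lt (by omega), Nat.cast_zero]
  · rfl

theorem mk_choose_sub_one_eq_sum (η r : ℕ) (hη : 1 ≤ η) :
    (PowerSeries.mk fun n => if η ≤ n then ((n - 1).choose r : R) else 0) =
      ∑ m ∈ range (r + 1), ((η - 1).choose (r - m) : R⟦X⟧) *
        (X ^ (η + m) * (invOneSubPow R (m + 1)).val) := by
  ext n
  simp only [X_pow_add_mul_invOneSubPow, map_sum, coeff_mk, ← map_natCast (C (R := R)),
    coeff_C_mul, mul_ite, mul_zero, sum_ite_irrel]
  split_ifs with hn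
  · rw [Nat.choose_sub_one_eq_sum hη hn r]
    push_cast
    rfl
  · exact sum_const_zero.symm

theorem one_sub_pow_mul_mk_choose_sub_one (η r : ℕ) (hη : 1 ≤ η) :
    (1 - X) ^ (r + 1) * (PowerSeries.mk fun n => if η ≤ n then ((n - 1).choose r : R) else 0) =
      ∑ m ∈ range (r + 1), ((η - 1).choose (r - m) : R⟦X⟧) * X ^ (η + m) * (1 - X) ^ (r - m) := by
  rw [mk_choose_sub_one_eq_sum η r hη, mul_sum]
  refine sum_congr rfl fun m hm => ?_
  rw [show r + 1 = (r - m) + (m + 1) by grind]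
  linear_combination (((η - 1).choose (r - m) : R⟦X⟧) * X ^ (η + m)) *
    one_sub_pow_add_mul_invOneSubPow_val_eq_one_sub_pow R (r - m) (m + 1)

end

theorem stmt_2 (k : ℕ) (hk : 2 ≤ k)
    (B : Matrix (Fin k) (Fin k) ℚ)
    (hB : ∀ i j : Fin k, B i j =
      if (i = j ∧ 1 ≤ (j : ℕ)) ∨ ((i : ℕ) + 1 = (j : ℕ)) then 1 else 0)
    (η : ℕ) (hη : 1 ≤ η) :
    ∃ p q : Fin k → ℕ, (∀ i, 1 ≤ q i) ∧ p ⟨k - 1, by omega⟩ = 1 ∧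
      (1 - PowerSeries.X) ^ (k - 1) *
          PowerSeries.mk (fun j =>
            if η ≤ j then (B ^ j) ⟨0, by omega⟩ ⟨k - 1, by omega⟩ else 0) =
        ∑ i : Fin k, (p i : PowerSeries ℚ) * PowerSeries.X ^ (q i) *
          (1 - PowerSeries.X) ^ (k - 1 - (i : ℕ)) := by
  refine ⟨fun i => if (i : ℕ) = 0 then 0 else (η - 1).choose (k - 1 - i),
    fun i => if (i : ℕ) = 0 then 1 else η + i - 1, fun i => by dsimp only; split_ifs <;> omega,
    by simp [show k - 1 ≠ 0 by omega], ?_⟩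
  obtain rfl : B = pathWithLoops ℚ k := Matrix.ext hB
  obtain ⟨r, rfl⟩ : ∃ r, k = r + 2 := ⟨k - 2, by omega⟩
  have tail : (PowerSeries.mk fun j => if η ≤ j then
      (pathWithLoops ℚ (r + 2) ^ j) ⟨0, by omega⟩ ⟨r + 2 - 1, by omega⟩ else 0) =
      PowerSeries.mk fun n => if η ≤ n then ((n - 1).choose r : ℚ) else 0 := by
    ext n
    rw [coeff_mk, coeff_mk]
    split_ifs with hn
    · obtain ⟨n, rfl⟩ : ∃ n', n = n' + 1 := ⟨n - 1, by omega⟩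
      rw [pathWithLoops.pow_succ_apply_zero]
      simp
    · rfl
  rw [tail, show r + 2 - 1 = r + 1 from rfl, one_sub_pow_mul_mk_choose_sub_one η r hη,
    ← Fin.sum_univ_eq_sum_range, Fin.sum_univ_succ (n := r + 1)]
  simp
end

section
/- In ℤ^r with the ℓ¹ metric, the generating function ∑_{n≥0} c_n z^n of the sphere sizes c_n = #{v ∈ ℤ^r : ‖v‖₁ = n} equals (1+z)^r/(1−z)^r in ℚ⟦z⟧; equivalently (1−z)^r ∑_n #{v : ‖v‖₁ = n} z^n = (1+z)^r. -/
/-!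
A point `v` of `ℤ^ι` with `‖v‖₁ = n` is a decomposition `n = ∑ᵢ kᵢ` together with, for each `i`,
an integer `vᵢ` with `|vᵢ| = kᵢ`. There is one such integer for `kᵢ = 0` and there are two
otherwise, so the sphere sizes are the coefficients of `A^|ι|` with `A = 2/(1 - z) - 1`, and
`(1 - z) A = 1 + z`.
-/

open PowerSeries Finset

def natAbsFiber (k : ℕ) : Finset ℤ := {(k : ℤ), -(k : ℤ)}

lemma mem_natAbsFiber {k : ℕ} {x : ℤ} : x ∈ natAbsFiber k ↔ x.natAbs = k := by
  rw [natAbsFiber, mem_insert, mem_singleton, Int.natAbs_eq_iff]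

lemma card_natAbsFiber (k : ℕ) : #(natAbsFiber k) = if k = 0 then 1 else 2 := by
  split_ifs with hk
  · simp [natAbsFiber, hk]
  · exact card_pair (by omega)

section Sphere

variable {ι : Type*} [Fintype ι] [DecidableEq ι]

variable (ι) in
def l1Sphere (n : ℕ) : Finset (ι → ℤ) :=
  (finsuppAntidiag univ n).biUnion fun l => Fintype.piFinset fun i => natAbsFiber (l i)

lemma mem_l1Sphere {n : ℕ} {v : ι → ℤ} : v ∈ l1Sphere ι n ↔ ∑ i, |v i| = n := by
  have hnorm : ∑ i, |v i| = ((∑ i, (v i).natAbs : ℕ) : ℤ) := by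
    push_cast [Int.natCast_natAbs]; rfl
  rw [hnorm, Nat.cast_inj]
  simp only [l1Sphere, mem_biUnion, mem_finsuppAntidiag, Fintype.mem_piFinset, mem_natAbsFiber]
  constructor
  · rintro ⟨l, ⟨hl, -⟩, hv⟩
    simpa [hv] using hl
  · intro hv
    exact ⟨Finsupp.equivFunOnFinite.symm fun i => (v i).natAbs,
      ⟨by simpa using hv, subset_univ _⟩, fun i => rfl⟩

lemma card_l1Sphere (n : ℕ) :
    #(l1Sphere ι n) = ∑ l ∈ finsuppAntidiag (univ : Finset ι) n, ∏ i, #(natAbsFiber (l i)) := by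
  rw [l1Sphere, card_biUnion]
  · simp_rw [Fintype.card_piFinset]
  · intro l _ l' _ hne
    refine disjoint_left.mpr fun v hv hv' => hne (Finsupp.ext fun i => ?_)
    simp only [Fintype.mem_piFinset, mem_natAbsFiber] at hv hv'
    rw [← hv i, hv' i]

end Sphere

section Series

variable (R : Type*)

def natAbsFiberSeries [Semiring R] : R⟦X⟧ := mk fun k => (#(natAbsFiber k) : R)

lemma mk_card_l1Sphere [CommSemiring R] (ι : Type*) [Fintype ι] [DecidableEq ι] :
    mk (fun n => (#(l1Sphere ι n) : R)) = natAbsFiberSeries R ^ Fintype.card ι := by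
  ext n
  rw [coeff_mk, card_l1Sphere, ← card_univ, ← prod_const, coeff_prod]
  push_cast
  simp only [natAbsFiberSeries, coeff_mk]

lemma one_sub_X_mul_natAbsFiberSeries [CommRing R] :
    (1 - X) * natAbsFiberSeries R = 1 + X := by
  have hgeom : natAbsFiberSeries R = 2 * PowerSeries.mk 1 - 1 := by
    ext k
    rcases eq_or_ne k 0 with rfl | hk
    · simp [natAbsFiberSeries, card_natAbsFiber, ← map_ofNat C]
      norm_num
    · simp [natAbsFiberSeries, card_natAbsFiber, hk, coeff_one, ← map_ofNat C]
  rw [hgeom, mul_sub, mul_left_comm, mul_comm (1 - X), mk_one_mul_one_sub_eq_one]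
  ring

end Series

theorem stmt_12 (r : ℕ) (c : ℕ → ℕ)
    (hc : ∀ n, c n = Set.ncard {v : Fin r → ℤ | ∑ i, |v i| = (n : ℤ)}) :
    (1 - PowerSeries.X) ^ r * PowerSeries.mk (fun n => (c n : ℚ)) =
      (1 + PowerSeries.X) ^ r := by
  have hc_card : c = fun n => #(l1Sphere (Fin r) n) := by
    ext n
    rw [hc, ← Set.ncard_coe_finset]
    congr
    ext v
    simp [mem_l1Sphere]
  rw [hc_card, mk_card_l1Sphere, Fintype.card_fin, ← mul_pow, one_sub_X_mul_natAbsFiberSeries]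
end

section
/- Let A be the transition matrix of a finite directed multigraph whose underlying loop-free part is a tree rooted at vertex 1 (each vertex other than the root has exactly one incoming non-loop edge) and in which each vertex has at most one loop. Then for each vertex k, the generating function ∑_{j≥0} (A^j)_{1,k} z^j of the number of j-walks from 1 to k is a rational function of the form z^q/(1−z)^s, where q is the length of the unique path from 1 to k and s is the number of vertices on that path (counting multiplicity) that carry a loop. -/
theorem stmt_14 (m : ℕ) (hm : 0 < m) (A : Matrix (Fin m) (Fin m) ℕ)
    (root : Fin m) (hroot : root = ⟨0, hm⟩)
    (par : Fin m → Fin m) (depth : Fin m → ℕ)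
    (hdiag : ∀ i, A i i ≤ 1)
    (hrootin : ∀ i, i ≠ root → A i root = 0)
    (hpar : ∀ j, j ≠ root →
      A (par j) j = 1 ∧ par j ≠ j ∧ ∀ i, i ≠ j → A i j ≠ 0 → i = par j)
    (hdepth0 : depth root = 0)
    (hdepth : ∀ j, j ≠ root → depth j = depth (par j) + 1) :
    ∀ k : Fin m,
      (1 - PowerSeries.X) ^
          ((((Finset.range (depth k + 1)).image (fun t => par^[t] k)).filter
              (fun v => A v v = 1)).card) *
          PowerSeries.mk (fun j => ((A ^ j) root k : ℚ)) =
        PowerSeries.X ^ depth k := by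
  have hD : ∀ t (v : Fin m), t ≤ depth v → depth (par^[t] v) + t = depth v := by
    intro t
    induction t with
    | zero => intro v _; simp
    | succ t ih =>
      intro v hv
      have hvroot : v ≠ root := by
        intro h; rw [h, hdepth0] at hv; omega
      have hdv := hdepth v hvroot
      rw [Function.iterate_succ_apply]
      have := ih (par v) (by omega)
      omega
  have hzero : ∀ v : Fin m, depth v = 0 → v = root := by
    intro v hv
    by_contra h
    have := hdepth v h; omega
  have hrecN : ∀ k : Fin m, k ≠ root → ∀ j, (A^(j+1)) root k
      = (A^j) root (par k) + (A^j) root k * A k k := by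
    intro k hk j
    rw [pow_succ, Matrix.mul_apply]
    have hpk := hpar k hk
    rw [← Finset.sum_subset (Finset.subset_univ ({par k, k} : Finset (Fin m)))]
    · rw [Finset.sum_pair hpk.2.1, hpk.1, mul_one]
    · intro i _ hi
      simp only [Finset.mem_insert, Finset.mem_singleton, not_or] at hi
      have : A i k = 0 := by
        by_contra h
        exact hi.1 (hpk.2.2 i hi.2 h)
      simp [this]
  have hrecroot : ∀ j, (A^j) root root = (A root root)^j := by
    intro j
    induction j with
    | zero => simp
    | succ j ih =>
      rw [pow_succ, Matrix.mul_apply]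
      rw [← Finset.sum_subset (Finset.subset_univ ({root} : Finset (Fin m)))]
      · rw [Finset.sum_singleton, ih, pow_succ]
      · intro i _ hi
        simp only [Finset.mem_singleton] at hi
        simp [hrootin i hi]
  have hS : ∀ k : Fin m, k ≠ root →
      ((Finset.range (depth k + 1)).image (fun t => par^[t] k)) =
        insert k ((Finset.range (depth (par k) + 1)).image (fun t => par^[t] (par k))) := by
    intro k hk
    have hdk := hdepth k hk
    ext x
    simp only [Finset.mem_image, Finset.mem_range, Finset.mem_insert]
    constructor
    · rintro ⟨t, ht, rfl⟩
      cases t with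
      | zero => left; simp
      | succ t =>
        right
        exact ⟨t, by omega, by rw [Function.iterate_succ_apply]⟩
    · rintro (rfl | ⟨t, ht, rfl⟩)
      · exact ⟨0, by omega, rfl⟩
      · exact ⟨t + 1, by omega, by rw [Function.iterate_succ_apply]⟩
  have hnotmem : ∀ k : Fin m, k ≠ root →
      k ∉ ((Finset.range (depth (par k) + 1)).image (fun t => par^[t] (par k))) := by
    intro k hk hmem
    simp only [Finset.mem_image, Finset.mem_range] at hmem
    obtain ⟨t, ht, hteq⟩ := hmem
    have := hD t (par k) (by omega)
    rw [hteq] at this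
    have := hdepth k hk
    omega
  suffices h : ∀ n (k : Fin m), depth k = n →
      (1 - PowerSeries.X) ^
          ((((Finset.range (depth k + 1)).image (fun t => par^[t] k)).filter
              (fun v => A v v = 1)).card) *
          PowerSeries.mk (fun j => ((A ^ j) root k : ℚ)) =
        PowerSeries.X ^ depth k by
    intro k; exact h (depth k) k rfl
  intro n
  induction n with
  | zero =>
    intro k hk
    have hkr : k = root := hzero k hk
    subst hkr
    simp only [hk, zero_add, pow_zero, Finset.range_one, Finset.image_singleton,
      Function.iterate_zero_apply, Finset.filter_singleton]
    rcases Nat.le_one_iff_eq_zero_or_eq_one.mp (hdiag k) with h0 | h1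
    · rw [if_neg (by omega)]
      simp only [Finset.card_empty, pow_zero, one_mul]
      ext j
      rw [PowerSeries.coeff_mk, hrecroot j, h0]
      cases j with
      | zero => simp
      | succ j => simp [PowerSeries.coeff_one]
    · rw [if_pos h1]
      simp only [Finset.card_singleton, pow_one]
      ext j
      rw [sub_mul, one_mul, map_sub]
      cases j with
      | zero =>
        simp [PowerSeries.coeff_mk, hrecroot, h1]
      | succ j =>
        rw [PowerSeries.coeff_succ_X_mul, PowerSeries.coeff_mk, PowerSeries.coeff_mk,
          hrecroot, hrecroot, h1]
        simp [PowerSeries.coeff_one]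
  | succ n ih =>
    intro k hk
    have hkr : k ≠ root := by
      intro h; rw [h, hdepth0] at hk; omega
    have hdk := hdepth k hkr
    have hdp : depth (par k) = n := by omega
    have hih := ih (par k) hdp
    rw [hS k hkr, Finset.filter_insert]
    have hrecQ : ∀ j, ((A^(j+1)) root k : ℚ)
        = ((A^j) root (par k) : ℚ) + ((A^j) root k : ℚ) * (A k k : ℚ) := by
      intro j
      rw [hrecN k hkr j]; push_cast; ring
    have hzeroQ : ((A ^ 0) root k : ℚ) = 0 := by
      simp only [pow_zero, Matrix.one_apply, Nat.cast_ite]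
      rw [if_neg (fun h => hkr h.symm)]
      simp
    rcases Nat.le_one_iff_eq_zero_or_eq_one.mp (hdiag k) with h0 | h1
    · rw [if_neg (by omega)]
      have hF : PowerSeries.mk (fun j => ((A ^ j) root k : ℚ))
          = PowerSeries.X * PowerSeries.mk (fun j => ((A ^ j) root (par k) : ℚ)) := by
        ext j
        cases j with
        | zero => simpa [PowerSeries.coeff_zero_X_mul] using hzeroQ
        | succ j =>
          rw [PowerSeries.coeff_succ_X_mul, PowerSeries.coeff_mk, PowerSeries.coeff_mk,
            hrecQ j, h0]
          push_cast; ring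
      rw [hF, hk, mul_left_comm, hih, hdp, ← pow_succ']
    · rw [if_pos h1, Finset.card_insert_of_notMem (by
        intro hmem
        exact hnotmem k hkr (Finset.mem_of_mem_filter k hmem))]
      have hF : (1 - PowerSeries.X) * PowerSeries.mk (fun j => ((A ^ j) root k : ℚ))
          = PowerSeries.X * PowerSeries.mk (fun j => ((A ^ j) root (par k) : ℚ)) := by
        ext j
        rw [sub_mul, one_mul, map_sub]
        cases j with
        | zero =>
          simp only [PowerSeries.coeff_zero_X_mul, PowerSeries.coeff_mk]
          rw [hzeroQ]; simp
        | succ j =>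
          rw [PowerSeries.coeff_succ_X_mul, PowerSeries.coeff_succ_X_mul,
            PowerSeries.coeff_mk, PowerSeries.coeff_mk, PowerSeries.coeff_mk,
            hrecQ j, h1]
          push_cast; ring
      rw [hk, pow_succ, mul_assoc, hF, mul_left_comm, hih, hdp, ← pow_succ']
end

section
/- Let w₁ and w₂ be words over an ordered alphabet {a₁,…,a_n} in normal form (all occurrences of a_i precede those of a_j for i < j), say w₁ = a₁^{r₁}⋯a_n^{r_n} and w₂ = a₁^{s₁}⋯a_n^{s_n}. Then for each t, ∑_{i=1}^n |r_i(t) − s_i(t)| ≤ 2·∑_{i=1}^n |r_i − s_i|, where r_i(t), s_i(t) are the exponents of a_i in the length-t prefixes of w₁ and w₂ respectively. -/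
private lemma step_ineq (t R S a b : ℕ) :
    |((min (t - R) a : ℕ) : ℤ) - ((min (t - S) b : ℕ) : ℤ)| ≤ |(a:ℤ) - b|
      + (|((min t R : ℕ) : ℤ) - ((min t S : ℕ) : ℤ)|
          - |((min t (R+a) : ℕ) : ℤ) - ((min t (S+b) : ℕ) : ℤ)|)
      + (|((R:ℤ)+a) - ((S:ℤ)+b)| - |(R:ℤ) - S|) := by
  simp only [Int.abs_eq_natAbs]
  omega

theorem stmt_15 (n : ℕ) (r s : Fin n → ℕ) (κ : ℕ)
    (hκ : (∑ i, |(r i : ℤ) - s i|) ≤ κ)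
    (pref : (Fin n → ℕ) → ℕ → Fin n → ℕ)
    (hpref : ∀ e t i, pref e t i = min (t - ∑ j ∈ Finset.Iio i, e j) (e i)) :
    ∀ t : ℕ, (∑ i, |(pref r t i : ℤ) - pref s t i|) ≤ 2 * ∑ i, |(r i : ℤ) - s i| := by
  intro t
  classical
  set r' : ℕ → ℕ := fun k => if h : k < n then r ⟨k, h⟩ else 0 with hr'
  set s' : ℕ → ℕ := fun k => if h : k < n then s ⟨k, h⟩ else 0 with hs'
  set R : ℕ → ℕ := fun k => ∑ j ∈ Finset.range k, r' j with hR
  set S : ℕ → ℕ := fun k => ∑ j ∈ Finset.range k, s' j with hS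
  have hIio : ∀ (e : Fin n → ℕ) (e' : ℕ → ℕ), (∀ i : Fin n, e' i.val = e i) →
      ∀ i : Fin n, (∑ j ∈ Finset.Iio i, e j) = ∑ j ∈ Finset.range i.val, e' j := by
    intro e e' he i
    rw [← Nat.Iio_eq_range, ← Fin.map_valEmbedding_Iio, Finset.sum_map]
    exact Finset.sum_congr rfl fun j _ => (he j).symm
  have hr'v : ∀ i : Fin n, r' i.val = r i := fun i => by simp [hr', i.isLt]
  have hs'v : ∀ i : Fin n, s' i.val = s i := fun i => by simp [hs', i.isLt]
  set g : ℕ → ℤ := fun k => |((min (t - R k) (r' k) : ℕ) : ℤ) - ((min (t - S k) (s' k) : ℕ) : ℤ)| with hg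
  set h : ℕ → ℤ := fun k => |((r' k : ℕ) : ℤ) - ((s' k : ℕ) : ℤ)| with hh
  have hsum1 : (∑ i, |(pref r t i : ℤ) - pref s t i|) = ∑ k ∈ Finset.range n, g k := by
    rw [← Fin.sum_univ_eq_sum_range]
    refine Finset.sum_congr rfl fun i _ => ?_
    rw [hpref, hpref, hIio r r' hr'v i, hIio s s' hs'v i]
    simp [hg, hr'v i, hs'v i, hR, hS]
  have hsum2 : (∑ i, |(r i : ℤ) - s i|) = ∑ k ∈ Finset.range n, h k := by
    rw [← Fin.sum_univ_eq_sum_range]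
    refine Finset.sum_congr rfl fun i _ => ?_
    simp [hh, hr'v i, hs'v i]
  set F : ℕ → ℤ := fun k => |((min t (R k) : ℕ) : ℤ) - ((min t (S k) : ℕ) : ℤ)| with hF
  set G : ℕ → ℤ := fun k => |((R k : ℤ)) - ((S k : ℤ))| with hG
  have hstep : ∀ k ∈ Finset.range n, g k ≤ h k + (F k - F (k+1)) + (G (k+1) - G k) := by
    intro k _
    have hRk : R (k+1) = R k + r' k := Finset.sum_range_succ r' k
    have hSk : S (k+1) = S k + s' k := Finset.sum_range_succ s' k
    have := step_ineq t (R k) (S k) (r' k) (s' k)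
    simp only [hg, hh, hF, hG, hRk, hSk]
    push_cast
    push_cast at this
    linarith
  have hGn : G n ≤ ∑ k ∈ Finset.range n, h k := by
    have : ((R n : ℤ)) - S n = ∑ k ∈ Finset.range n, (((r' k : ℤ)) - s' k) := by
      rw [Finset.sum_sub_distrib]
      push_cast [hR, hS]
      ring
    rw [hG]
    simp only [this]
    exact Finset.abs_sum_le_sum_abs _ _
  have hF0 : F 0 = 0 := by simp [hF, hR, hS]
  have hG0 : G 0 = 0 := by simp [hG, hR, hS]
  have hFn : 0 ≤ F n := abs_nonneg _
  calc (∑ i, |(pref r t i : ℤ) - pref s t i|)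
      = ∑ k ∈ Finset.range n, g k := hsum1
    _ ≤ ∑ k ∈ Finset.range n, (h k + (F k - F (k+1)) + (G (k+1) - G k)) :=
        Finset.sum_le_sum hstep
    _ = (∑ k ∈ Finset.range n, h k) + (F 0 - F n) + (G n - G 0) := by
        rw [Finset.sum_add_distrib, Finset.sum_add_distrib,
          Finset.sum_range_sub' F, Finset.sum_range_sub G]
    _ ≤ 2 * ∑ i, |(r i : ℤ) - s i| := by rw [hsum2]; linarith
end
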